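/- arXiv:1605.03569 — 2 statements merged into one kernel-verified Lean document; each statement's English description precedes it below -/
import Mathlib

section
/- Let T be a path on vertices u₀ = r, u₁, …, uₙ rooted at the leaf u₀, with edges eᵢ = (u_{i-1},uᵢ). If (T,c,p) is a security system with p(uᵢ) > p(u_{i+1}) and c(e_{i+1}) > 0 for some i, then swapping the prizes of uᵢ and u_{i+1} yields an improved security system: for every budget B the attacker's maximum prize does not increase, and for the budget B' = c(e₁)+⋯+c(eᵢ) it strictly decreases. -/
/-!
On a path every attack is a prefix `{u₁, …, u_k}`. An attack containing `u_{i+1}` therefore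
contains `uᵢ` as well and collects the same total prize after the swap, while any other attack
collects at most as much, since `p(u_{i+1}) < p(uᵢ)`; so no budget gains. At the budget
`B' = c(e₁) + ⋯ + c(eᵢ)` the positive cost of `e_{i+1}` confines every affordable attack to
`{u₁, …, uᵢ}`, whose prize strictly drops under the swap.
-/

open Classical in
/-- `maxp n par c p B`: the maximum total prize of a system attack (a rooted
subtree, encoded as a parent-closed set `A` of non-root vertices of the rooted
tree on `Fin (n+1)` with root `0` and parent function `par`; the edge with head
`v` has cost `c v` and the vertex `v` has prize `p v`) whose total edge-cost is
at most the budget `B`. -/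
noncomputable def maxp (n : ℕ) (par : Fin (n+1) → Fin (n+1))
    (c p : Fin (n+1) → ℚ) (B : ℚ) : ℚ :=
  WithBot.unbotD 0 ((((Finset.univ.filter (fun v : Fin (n+1) => v ≠ 0)).powerset).filter
      (fun A => (∀ v ∈ A, par v = 0 ∨ par v ∈ A) ∧ ∑ v ∈ A, c v ≤ B)).image
    (fun A => ∑ v ∈ A, p v)).max

/-- The multiset of values of `f` over the non-root vertices. -/
def valsNR (n : ℕ) (f : Fin (n+1) → ℚ) : Multiset ℚ :=
  (Finset.univ.filter (fun v : Fin (n+1) => v ≠ 0)).val.map f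

/-- Parent function of the path `r = u₀, u₁, …, uₙ` rooted at the leaf `u₀`. -/
def pathPar (n : ℕ) : Fin (n+1) → Fin (n+1) :=
  fun v => ⟨v.val - 1, by have := v.isLt; omega⟩

section SwapSum

variable {α M : Type*} [DecidableEq α] {s : Finset α} {f : α → M} {a b : α}

theorem Finset.sum_comp_swap_add_of_mem_of_notMem [AddCommMonoid M]
    (ha : a ∈ s) (hb : b ∉ s) :
    ∑ x ∈ s, f (Equiv.swap a b x) + f a = ∑ x ∈ s, f x + f b := by
  have hrest : ∑ x ∈ s.erase a, f (Equiv.swap a b x) = ∑ x ∈ s.erase a, f x :=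
    Finset.sum_congr rfl fun x hx =>
      congrArg f (Equiv.swap_apply_of_ne_of_ne (Finset.ne_of_mem_erase hx)
        (ne_of_mem_of_not_mem (Finset.mem_of_mem_erase hx) hb))
  rw [← Finset.add_sum_erase _ _ ha, ← Finset.add_sum_erase _ f ha, hrest,
    Equiv.swap_apply_left]
  abel

variable [AddCommGroup M] [PartialOrder M] [IsOrderedAddMonoid M]

theorem Finset.sum_comp_swap_lt (hab : f b < f a) (ha : a ∈ s) (hb : b ∉ s) :
    ∑ x ∈ s, f (Equiv.swap a b x) < ∑ x ∈ s, f x :=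
  lt_of_add_lt_add_right <|
    (Finset.sum_comp_swap_add_of_mem_of_notMem ha hb).trans_lt (add_lt_add_right hab _)

theorem Finset.sum_comp_swap_le (hab : f b ≤ f a) (hs : b ∈ s → a ∈ s) :
    ∑ x ∈ s, f (Equiv.swap a b x) ≤ ∑ x ∈ s, f x := by
  by_cases hb : b ∈ s
  · refine (Equiv.Perm.sum_comp _ s f fun x hx => ?_).le
    rcases (Equiv.swap_apply_ne_self_iff.1 hx).2 with rfl | rfl
    exacts [hs hb, hb]
  by_cases ha : a ∈ s
  · exact le_of_add_le_add_right <|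
      (Finset.sum_comp_swap_add_of_mem_of_notMem ha hb).trans_le (add_le_add_right hab _)
  · exact (Finset.sum_congr rfl fun x hx => congrArg f (Equiv.swap_apply_of_ne_of_ne
      (ne_of_mem_of_not_mem hx ha) (ne_of_mem_of_not_mem hx hb))).le

end SwapSum

section UnbotDMax

variable {α : Type*} [LinearOrder α] {s : Finset α} {d : α}

theorem Finset.le_unbotD_max {x : α} (hx : x ∈ s) : x ≤ s.max.unbotD d := by
  obtain ⟨a, ha⟩ := Finset.max_of_mem hx
  have hle := Finset.le_max hx
  rw [ha] at hle ⊢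
  exact WithBot.coe_le_coe.1 hle

theorem Finset.unbotD_max_le {m : α} (hd : d ≤ m) (h : ∀ x ∈ s, x ≤ m) :
    s.max.unbotD d ≤ m := by
  cases hmax : s.max with
  | bot => exact hd
  | coe x => exact h x (Finset.mem_of_max hmax)

end UnbotDMax

section Attack

variable {n : ℕ}

def IsAttack (par : Fin (n+1) → Fin (n+1)) (A : Finset (Fin (n+1))) : Prop :=
  (∀ v ∈ A, v ≠ 0) ∧ ∀ v ∈ A, par v = 0 ∨ par v ∈ A

variable {par : Fin (n+1) → Fin (n+1)} {c p : Fin (n+1) → ℚ} {B : ℚ}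

theorem le_maxp {A : Finset (Fin (n+1))} (hA : IsAttack par A) (hcost : ∑ v ∈ A, c v ≤ B) :
    ∑ v ∈ A, p v ≤ maxp n par c p B := by
  refine Finset.le_unbotD_max (Finset.mem_image_of_mem _ (Finset.mem_filter.2 ⟨?_, hA.2, hcost⟩))
  exact Finset.mem_powerset.2 fun v hv => Finset.mem_filter.2 ⟨Finset.mem_univ v, hA.1 v hv⟩

theorem maxp_le {m : ℚ} (hm : 0 ≤ m)
    (h : ∀ A, IsAttack par A → ∑ v ∈ A, c v ≤ B → ∑ v ∈ A, p v ≤ m) :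
    maxp n par c p B ≤ m := by
  refine Finset.unbotD_max_le hm fun x hx => ?_
  obtain ⟨A, hA, rfl⟩ := Finset.mem_image.1 hx
  obtain ⟨hsub, hclosed, hcost⟩ := Finset.mem_filter.1 hA
  exact h A ⟨fun v hv => (Finset.mem_filter.1 (Finset.mem_powerset.1 hsub hv)).2, hclosed⟩ hcost

theorem maxp_mono_prize {p' : Fin (n+1) → ℚ} (hB : 0 ≤ B)
    (h : ∀ A, IsAttack par A → ∑ v ∈ A, p' v ≤ ∑ v ∈ A, p v) :
    maxp n par c p' B ≤ maxp n par c p B := by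
  have hempty : IsAttack par ∅ := ⟨by simp, by simp⟩
  have hnonneg : 0 ≤ maxp n par c p B := by
    simpa using le_maxp (p := p) hempty (by simpa using hB)
  exact maxp_le hnonneg fun A hA hcost => (h A hA).trans (le_maxp hA hcost)

end Attack

section Path

variable {n : ℕ}

def pathPrefix (n k : ℕ) : Finset (Fin (n+1)) :=
  Finset.univ.filter fun v => 1 ≤ v.val ∧ v.val ≤ k

theorem mem_pathPrefix {k : ℕ} {v : Fin (n+1)} : v ∈ pathPrefix n k ↔ 1 ≤ v.val ∧ v.val ≤ k := by
  simp [pathPrefix]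

theorem isAttack_pathPrefix (k : ℕ) : IsAttack (pathPar n) (pathPrefix n k) := by
  refine ⟨fun v hv h0 => by simp [mem_pathPrefix, h0] at hv, fun v hv => ?_⟩
  rw [mem_pathPrefix] at hv
  by_cases hv1 : v.val = 1
  · exact Or.inl (Fin.ext (by simp [pathPar, hv1]))
  · exact Or.inr (mem_pathPrefix.2 (by simp only [pathPar]; omega))

theorem pathPrefix_succ {k : ℕ} (hk : k + 1 ≤ n) :
    pathPrefix n (k + 1) = insert ⟨k + 1, Nat.lt_succ_of_le hk⟩ (pathPrefix n k) := by
  ext v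
  simp only [mem_pathPrefix, Finset.mem_insert, Fin.ext_iff]
  omega

theorem IsAttack.mem_of_le {A : Finset (Fin (n+1))} (hA : IsAttack (pathPar n) A)
    {v w : Fin (n+1)} (hv : v ∈ A) (hw : w ≠ 0) (hwv : w ≤ v) : w ∈ A := by
  induction hd : v.val - w.val generalizing v with
  | zero => rwa [← Fin.le_antisymm hwv (Fin.le_iff_val_le_val.2 (by omega))] at hv
  | succ d ih =>
    have hw0 : w.val ≠ 0 := fun h => hw (Fin.ext h)
    have hpar : (pathPar n v).val = v.val - 1 := rfl
    rcases hA.2 v hv with h0 | hmem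
    · have : (pathPar n v).val = 0 := by rw [h0]; rfl
      omega
    · exact ih hmem (Fin.le_iff_val_le_val.2 (by omega)) (by omega)

theorem IsAttack.subset_pathPrefix {A : Finset (Fin (n+1))} (hA : IsAttack (pathPar n) A)
    {k : ℕ} (hk : k + 1 ≤ n) (hnot : ⟨k + 1, Nat.lt_succ_of_le hk⟩ ∉ A) : A ⊆ pathPrefix n k := by
  intro v hv
  have hv0 : v.val ≠ 0 := fun h => hA.1 v hv (Fin.ext h)
  refine mem_pathPrefix.2 ⟨by omega, not_lt.1 fun hkv => hnot ?_⟩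
  exact hA.mem_of_le hv (fun h => by simp [Fin.ext_iff] at h) (Fin.le_iff_val_le_val.2 hkv)

theorem IsAttack.pathPrefix_subset {A : Finset (Fin (n+1))} (hA : IsAttack (pathPar n) A)
    {v : Fin (n+1)} (hv : v ∈ A) : pathPrefix n v.val ⊆ A := fun w hw =>
  have hw' := mem_pathPrefix.1 hw
  hA.mem_of_le hv (fun h => by simp [h] at hw') (Fin.le_iff_val_le_val.2 hw'.2)

theorem IsAttack.subset_pathPrefix_of_cost_le {c : Fin (n+1) → ℚ} (hc : ∀ v, 0 ≤ c v)
    {k : ℕ} (hk : k + 1 ≤ n) (hck : 0 < c ⟨k + 1, Nat.lt_succ_of_le hk⟩)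
    {A : Finset (Fin (n+1))} (hA : IsAttack (pathPar n) A)
    (hcost : ∑ v ∈ A, c v ≤ ∑ v ∈ pathPrefix n k, c v) : A ⊆ pathPrefix n k := by
  refine hA.subset_pathPrefix hk fun hmem => ?_
  have hsucc : ∑ v ∈ pathPrefix n (k + 1), c v ≤ ∑ v ∈ A, c v :=
    Finset.sum_le_sum_of_subset_of_nonneg (hA.pathPrefix_subset hmem) fun v _ _ => hc v
  rw [pathPrefix_succ hk, Finset.sum_insert (by simp [mem_pathPrefix])] at hsucc
  linarith

end Path

/-- On a rooted path, if `p uᵢ > p u_{i+1}` and `c e_{i+1} > 0`, then swapping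
the prizes of `uᵢ` and `u_{i+1}` gives an improved security system: the max
prize never increases, and strictly decreases for `B' = c e₁ + ⋯ + c eᵢ`. -/
theorem stmt4 (n : ℕ) (c p : Fin (n+1) → ℚ)
    (hc : ∀ v, 0 ≤ c v) (hp : ∀ v, 0 ≤ p v)
    (i : ℕ) (hi1 : 1 ≤ i) (hin : i + 1 ≤ n)
    (hpi : p ⟨i+1, by omega⟩ < p ⟨i, by omega⟩)
    (hci : 0 < c ⟨i+1, by omega⟩) :
    (∀ B : ℚ, 0 ≤ B →
      maxp n (pathPar n) c (p ∘ Equiv.swap ⟨i, by omega⟩ ⟨i+1, by omega⟩) B ≤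
        maxp n (pathPar n) c p B) ∧
    maxp n (pathPar n) c (p ∘ Equiv.swap ⟨i, by omega⟩ ⟨i+1, by omega⟩)
        (∑ v ∈ Finset.univ.filter
          (fun v : Fin (n+1) => 1 ≤ v.val ∧ v.val ≤ i), c v) <
      maxp n (pathPar n) c p
        (∑ v ∈ Finset.univ.filter
          (fun v : Fin (n+1) => 1 ≤ v.val ∧ v.val ≤ i), c v) := by
  have hsucc_mem : ∀ A, IsAttack (pathPar n) A →
      (⟨i+1, by omega⟩ : Fin (n+1)) ∈ A → (⟨i, by omega⟩ : Fin (n+1)) ∈ A := fun A hA hb =>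
    hA.pathPrefix_subset hb (mem_pathPrefix.2 ⟨hi1, Nat.le_succ i⟩)
  refine ⟨fun B hB => maxp_mono_prize hB fun A hA =>
    Finset.sum_comp_swap_le hpi.le (hsucc_mem A hA), ?_⟩
  rw [show Finset.univ.filter (fun v : Fin (n+1) => 1 ≤ v.val ∧ v.val ≤ i) = pathPrefix n i
    from rfl]
  set σ := Equiv.swap (⟨i, by omega⟩ : Fin (n+1)) ⟨i+1, by omega⟩
  set B' := ∑ v ∈ pathPrefix n i, c v
  calc maxp n (pathPar n) c (p ∘ σ) B' ≤ ∑ v ∈ pathPrefix n i, p (σ v) :=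
        maxp_le (Finset.sum_nonneg fun v _ => hp _) fun A hA hcost =>
          Finset.sum_le_sum_of_subset_of_nonneg
            (hA.subset_pathPrefix_of_cost_le hc hin hci hcost) fun v _ _ => hp _
    _ < ∑ v ∈ pathPrefix n i, p v :=
        Finset.sum_comp_swap_lt hpi (mem_pathPrefix.2 ⟨hi1, le_rfl⟩) (by simp [mem_pathPrefix])
    _ ≤ maxp n (pathPar n) c p B' := le_maxp (isAttack_pathPrefix i) le_rfl
end

section
/- Let T be a path on n+1 vertices rooted at a leaf, and let M = (T,C,P) be a cyber-security model. The security system assigning the penetration costs to the edges in decreasing order from the root and the prizes to the vertices in increasing order from the root is optimal: for every budget B it minimizes the attacker's maximum prize over all security systems for M. -/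
/-!
An attack on a path rooted at a leaf is an initial segment `{1, …, k}`. Costs decreasing from
the root put the `k` largest costs on that segment, so under any other assignment of the same
costs it is no more expensive and stays within budget; prizes increasing from the root put the
`k` smallest prizes on it, so under any other assignment it yields no less. Every attack of the
proposed system is thus matched by an attack of any other system with at least the same prize.
Both comparisons are one exchange argument: if `#t = #s` and `f` is larger on every point of
`s \ t` than on any point of `t \ s`, then `∑ t f ≤ ∑ s f`.
-/

open Finset

theorem Multiset.exists_le_map_eq_of_le_map {α β : Type*} {f : α → β} {S : Multiset β}
    {s : Multiset α} (h : S ≤ s.map f) : ∃ t ≤ s, t.map f = S := by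
  induction s using Quotient.inductionOn
  induction S using Quotient.inductionOn
  obtain ⟨l, hperm, hsub⟩ := Multiset.coe_le.1 h
  obtain ⟨t, ht, rfl⟩ := List.sublist_map_iff.1 hsub
  exact ⟨t, Multiset.coe_le.2 ht.subperm, Multiset.coe_eq_coe.2 hperm⟩

theorem Finset.sum_le_sum_of_card_eq {ι M : Type*} [DecidableEq ι] [AddCommMonoid M]
    [LinearOrder M] [IsOrderedAddMonoid M] {f : ι → M} {s t : Finset ι} (hcard : #t = #s)
    (h : ∀ i ∈ s \ t, ∀ j ∈ t \ s, f j ≤ f i) : ∑ j ∈ t, f j ≤ ∑ i ∈ s, f i := by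
  have hsdiff : #(t \ s) = #(s \ t) := card_sdiff_comm hcard
  rcases (t \ s).eq_empty_or_nonempty with hts | hts
  · rw [hts, card_empty, eq_comm, card_eq_zero] at hsdiff
    rw [sdiff_eq_empty_iff_subset] at hts hsdiff
    rw [Subset.antisymm hts hsdiff]
  obtain ⟨j₀, hj₀, hmax⟩ := (t \ s).exists_max_image f hts
  calc ∑ j ∈ t, f j = ∑ j ∈ t ∩ s, f j + ∑ j ∈ t \ s, f j := (sum_inter_add_sum_sdiff t s f).symm
    _ ≤ ∑ j ∈ s ∩ t, f j + #(s \ t) • f j₀ := by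
      rw [inter_comm, ← hsdiff]
      gcongr
      exact sum_le_card_nsmul _ _ _ hmax
    _ ≤ ∑ i ∈ s ∩ t, f i + ∑ i ∈ s \ t, f i := by
      gcongr
      exact card_nsmul_le_sum _ _ _ fun i hi => h i hi j₀ hj₀
    _ = ∑ i ∈ s, f i := sum_inter_add_sum_sdiff s t f

def nonRoot (n : ℕ) : Finset (Fin (n+1)) :=
  univ.filter (fun v : Fin (n+1) => v ≠ 0)

def attacks (n : ℕ) (par : Fin (n+1) → Fin (n+1)) (c : Fin (n+1) → ℚ) (B : ℚ) :
    Finset (Finset (Fin (n+1))) :=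
  (nonRoot n).powerset.filter
    (fun A => (∀ v ∈ A, par v = 0 ∨ par v ∈ A) ∧ ∑ v ∈ A, c v ≤ B)

section attacks

variable {n : ℕ} {par : Fin (n+1) → Fin (n+1)} {c p : Fin (n+1) → ℚ} {B : ℚ}

theorem mem_attacks {A : Finset (Fin (n+1))} : A ∈ attacks n par c B ↔
    A ⊆ nonRoot n ∧ (∀ v ∈ A, par v = 0 ∨ par v ∈ A) ∧ ∑ v ∈ A, c v ≤ B := by
  rw [attacks, mem_filter, mem_powerset]

theorem maxp_eq : maxp n par c p B =
    WithBot.unbotD 0 ((attacks n par c B).image (fun A => ∑ v ∈ A, p v)).max := rfl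

theorem sum_le_maxp {A : Finset (Fin (n+1))} (hA : A ∈ attacks n par c B) :
    ∑ v ∈ A, p v ≤ maxp n par c p B := by
  have hmem := mem_image_of_mem (fun A => ∑ v ∈ A, p v) hA
  rw [maxp_eq, ← coe_max' ⟨_, hmem⟩, WithBot.unbotD_coe]
  exact le_max' _ _ hmem

theorem maxp_eq_zero_or_exists_sum_eq :
    maxp n par c p B = 0 ∨ ∃ A ∈ attacks n par c B, maxp n par c p B = ∑ v ∈ A, p v := by
  rcases (attacks n par c B).eq_empty_or_nonempty with h | h
  · left
    simp [maxp_eq, h]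
  · right
    have hne := h.image (fun A => ∑ v ∈ A, p v)
    obtain ⟨A, hA, hsum⟩ := mem_image.1 (max'_mem _ hne)
    refine ⟨A, hA, ?_⟩
    rw [maxp_eq, ← coe_max' hne, WithBot.unbotD_coe, hsum]

theorem empty_mem_attacks (hB : 0 ≤ B) : ∅ ∈ attacks n par c B := by
  simp [attacks, hB]

theorem maxp_le_maxp {c' p' : Fin (n+1) → ℚ} {B' : ℚ} (hB' : 0 ≤ B')
    (h : ∀ A ∈ attacks n par c B, A ∈ attacks n par c' B' ∧ ∑ v ∈ A, p v ≤ ∑ v ∈ A, p' v) :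
    maxp n par c p B ≤ maxp n par c' p' B' := by
  rcases @maxp_eq_zero_or_exists_sum_eq n par c p B with h0 | ⟨A, hA, hsum⟩
  · rw [h0]
    simpa using sum_le_maxp (p := p') (empty_mem_attacks hB')
  · rw [hsum]
    exact (h A hA).2.trans (sum_le_maxp (h A hA).1)

end attacks

theorem valsNR_neg (n : ℕ) (f : Fin (n+1) → ℚ) : valsNR n (-f) = (valsNR n f).map (-·) := by
  rw [valsNR, valsNR, Multiset.map_map]
  rfl

section path

variable {n : ℕ} {A : Finset (Fin (n+1))}

theorem mem_of_le_of_pathPar_closed (hA : ∀ v ∈ A, pathPar n v = 0 ∨ pathPar n v ∈ A)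
    {v w : Fin (n+1)} (hv : v ∈ A) (hw : w ≠ 0) (hwv : w ≤ v) : w ∈ A := by
  have hw' : w.val ≠ 0 := Fin.val_ne_iff.2 hw
  obtain ⟨k, hk⟩ : ∃ k, v.val = w.val + k := ⟨v.val - w.val, by omega⟩
  induction k generalizing v with
  | zero => rwa [← Fin.ext hk]
  | succ k ih =>
    have hpar : (pathPar n v).val = w.val + k := by simp only [pathPar]; omega
    rcases hA v hv with h0 | hmem
    · rw [h0, Fin.val_zero] at hpar
      omega
    · exact ih hmem (Fin.le_def.2 (by omega)) hpar

theorem sum_le_sum_of_valsNR_eq {f g : Fin (n+1) → ℚ}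
    (hf : ∀ v w : Fin (n+1), v ≠ 0 → v ≤ w → f w ≤ f v) (hg : valsNR n g = valsNR n f)
    (hAsub : A ⊆ nonRoot n) (hApar : ∀ v ∈ A, pathPar n v = 0 ∨ pathPar n v ∈ A) :
    ∑ v ∈ A, g v ≤ ∑ v ∈ A, f v := by
  have hle : A.val.map g ≤ (nonRoot n).val.map f :=
    (Multiset.map_le_map (val_le_iff.2 hAsub)).trans_eq hg
  obtain ⟨t, ht, hmap⟩ := Multiset.exists_le_map_eq_of_le_map hle
  let D : Finset (Fin (n+1)) := ⟨t, Multiset.nodup_of_le ht (nonRoot n).nodup⟩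
  have hDsub : D ⊆ nonRoot n := val_le_iff.1 ht
  have hsum : ∑ v ∈ A, g v = ∑ v ∈ D, f v := by
    rw [sum_eq_multiset_sum, sum_eq_multiset_sum, ← hmap]
  rw [hsum]
  refine sum_le_sum_of_card_eq ?_ fun a ha d hd => ?_
  · change Multiset.card t = Multiset.card A.val
    rw [← Multiset.card_map f, hmap, Multiset.card_map]
  · rw [mem_sdiff] at ha hd
    have ha0 : a ≠ 0 := (mem_filter.1 (hAsub ha.1)).2
    have hd0 : d ≠ 0 := (mem_filter.1 (hDsub hd.1)).2
    exact hf a d ha0 <| le_of_not_ge fun hda =>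
      hd.2 (mem_of_le_of_pathPar_closed hApar ha.1 hd0 hda)

end path

theorem stmt6_general (n : ℕ) (c p : Fin (n+1) → ℚ)
    (hcdec : ∀ v w : Fin (n+1), v ≠ 0 → v ≤ w → c w ≤ c v)
    (hpinc : ∀ v w : Fin (n+1), v ≠ 0 → v ≤ w → p v ≤ p w) :
    ∀ B : ℚ, 0 ≤ B → ∀ c' p' : Fin (n+1) → ℚ,
      valsNR n c' = valsNR n c → valsNR n p' = valsNR n p →
      maxp n (pathPar n) c p B ≤ maxp n (pathPar n) c' p' B := by
  intro B hB c' p' hc' hp'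
  refine maxp_le_maxp hB fun A hA => ?_
  obtain ⟨hsub, hpar, hcost⟩ := mem_attacks.1 hA
  have hcost' := sum_le_sum_of_valsNR_eq hcdec hc' hsub hpar
  have hprize := sum_le_sum_of_valsNR_eq (f := -p) (g := -p')
    (fun v w hv hvw => neg_le_neg (hpinc v w hv hvw))
    (by rw [valsNR_neg, valsNR_neg, hp']) hsub hpar
  simp only [Pi.neg_apply, sum_neg_distrib, neg_le_neg_iff] at hprize
  exact ⟨mem_attacks.2 ⟨hsub, hpar, hcost'.trans hcost⟩, hprize⟩

/-- On a path rooted at a leaf, assigning the costs in decreasing order and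
the prizes in increasing order from the root is an optimal security system. -/
theorem stmt6 (n : ℕ) (c p : Fin (n+1) → ℚ)
    (hc : ∀ v, 0 ≤ c v) (hp : ∀ v, 0 ≤ p v)
    (hcdec : ∀ v w : Fin (n+1), v ≠ 0 → v ≤ w → c w ≤ c v)
    (hpinc : ∀ v w : Fin (n+1), v ≠ 0 → v ≤ w → p v ≤ p w) :
    ∀ B : ℚ, 0 ≤ B → ∀ c' p' : Fin (n+1) → ℚ,
      valsNR n c' = valsNR n c → valsNR n p' = valsNR n p →
      maxp n (pathPar n) c p B ≤ maxp n (pathPar n) c' p' B :=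
  stmt6_general n c p hcdec hpinc
end
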